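/- Let A be a unital C*-algebra and let a, b ∈ A with 0 ≤ a, b ≤ 1. Then a is absolutely compatible with b if and only if 2(a∘b) = a + b - |a - b|, where a∘b = (ab + ba)/2 is the Jordan product. -/

import Mathlib

/-!
Put `p = |a - b|`. Since `-1 ≤ a - b ≤ 1` we have `0 ≤ 1 - p`, so by uniqueness of positive
square roots, absolute compatibility `|1 - a - b| = 1 - p` amounts to
`(1 - p)² = (1 - a - b)²`. Expanding with `p² = (a - b)²` gives, without any commutativity,
`(1 - a - b)² - (1 - p)² = 2 (ab + ba - (a + b - p))`.
-/

/-- The absolute value `|x| = (x* x)^(1/2)` in a C*-algebra. -/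
noncomputable def cstarAbs {A : Type*} [CStarAlgebra A] [PartialOrder A] [StarOrderedRing A]
    (x : A) : A := CFC.sqrt (star x * x)

theorem mul_self_one_sub_eq_iff {R : Type*} [Ring R] [IsAddTorsionFree R] {a b p : R}
    (hp : p * p = (a - b) * (a - b)) :
    (1 - p) * (1 - p) = (1 - a - b) * (1 - a - b) ↔ a * b + b * a = a + b - p := by
  have key : (1 - a - b) * (1 - a - b) - (1 - p) * (1 - p)
      = ((a - b) * (a - b) - p * p) + 2 • (a * b + b * a - (a + b - p)) := by
    noncomm_ring
  rw [hp, sub_self, zero_add] at key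
  rw [← sub_eq_zero, ← neg_sub, neg_eq_zero, key, two_nsmul_eq_zero, sub_eq_zero]

namespace CFC

variable {A : Type*} [CStarAlgebra A] [PartialOrder A] [StarOrderedRing A]

theorem abs_eq_iff_mul_self_eq {x z : A} (hx : IsSelfAdjoint x) (hz : 0 ≤ z) :
    abs x = z ↔ z * z = x * x := by
  rw [abs, sqrt_eq_iff _ _ (star_mul_self_nonneg x) hz, hx.star_eq]

theorem abs_le_one_of_neg_one_le_of_le_one {x : A} (hx : IsSelfAdjoint x)
    (h₀ : -1 ≤ x) (h₁ : x ≤ 1) : abs x ≤ 1 := by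
  have hle : ∀ t ∈ spectrum ℝ x, t ≤ 1 :=
    (le_algebraMap_iff_spectrum_le hx).mp (by rwa [map_one])
  have hge : ∀ t ∈ spectrum ℝ x, -1 ≤ t :=
    (algebraMap_le_iff_le_spectrum hx).mp (by rwa [map_neg, map_one])
  rw [abs_eq_cfc_norm x hx, cfc_le_one_iff _ _]
  exact fun t ht => abs_le.mpr ⟨hge t ht, hle t ht⟩

end CFC

theorem cstarAbs_eq_cfcAbs {A : Type*} [CStarAlgebra A] [PartialOrder A] [StarOrderedRing A]
    (x : A) : cstarAbs x = CFC.abs x :=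
  rfl

/-- For `0 ≤ a, b ≤ 1` in a unital C*-algebra, `a` is absolutely compatible with `b`
iff `2 (a ∘ b) = a + b - |a - b|`, where `a ∘ b = (ab + ba)/2`. -/
theorem stmt1 {A : Type*} [CStarAlgebra A] [PartialOrder A] [StarOrderedRing A]
    (a b : A) (ha0 : 0 ≤ a) (ha1 : a ≤ 1) (hb0 : 0 ≤ b) (hb1 : b ≤ 1) :
    cstarAbs (a - b) + cstarAbs (1 - a - b) = 1 ↔
      2 • ((2 : ℂ)⁻¹ • (a * b + b * a)) = a + b - cstarAbs (a - b) := by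
  have : IsAddTorsionFree A := .of_isTorsionFree ℂ A
  have hsa : IsSelfAdjoint a := .of_nonneg ha0
  have hsb : IsSelfAdjoint b := .of_nonneg hb0
  have habs_le : CFC.abs (a - b) ≤ 1 :=
    CFC.abs_le_one_of_neg_one_le_of_le_one (hsa.sub hsb)
      (by simpa using sub_le_sub ha0 hb1) (by simpa using sub_le_sub ha1 hb0)
  have hjordan : 2 • ((2 : ℂ)⁻¹ • (a * b + b * a)) = a * b + b * a := by
    rw [← Nat.cast_smul_eq_nsmul ℂ, smul_smul]
    norm_num
  rw [hjordan, cstarAbs_eq_cfcAbs, cstarAbs_eq_cfcAbs, ← eq_sub_iff_add_eq',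
    CFC.abs_eq_iff_mul_self_eq (((IsSelfAdjoint.one A).sub hsa).sub hsb) (sub_nonneg.mpr habs_le)]
  exact mul_self_one_sub_eq_iff (by rw [CFC.abs_mul_abs, (hsa.sub hsb).star_eq])
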